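/- Let X be a metric space and suppose there is a family 𝒴 of metric spaces with uniform asymptotic property C such that for every sequence R of positive reals, X admits a uniform R-decomposition over 𝒴 (i.e., there exists k and Rᵢ-disjoint subfamilies 𝒰₁,…,𝒰ₖ ⊆ 𝒴 of subspaces of X with ⋃ᵢ𝒰ᵢ covering X). Then X has asymptotic property C. -/

import Mathlib

/-- A family of subsets of a metric space is `r`-disjoint if points in distinct
members are at distance `> r`. -/
def RDisjoint {X : Type*} [MetricSpace X] (r : ℝ) (𝒰 : Set (Set X)) : Prop :=
  ∀ U ∈ 𝒰, ∀ V ∈ 𝒰, U ≠ V → ∀ x ∈ U, ∀ y ∈ V, r < dist x y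

/-- Asymptotic property C. -/
def APC (X : Type*) [MetricSpace X] : Prop :=
  ∀ R : ℕ → ℝ, (∀ i, 0 < R i) →
    ∃ (n : ℕ) (𝒰 : Fin n → Set (Set X)) (D : ℝ),
      (∀ i : Fin n, RDisjoint (R i.val) (𝒰 i)) ∧
      (∀ x : X, ∃ i, ∃ U ∈ 𝒰 i, x ∈ U) ∧
      (∀ i, ∀ U ∈ 𝒰 i, ∀ x ∈ U, ∀ y ∈ U, dist x y ≤ D)

/-- A family `𝒴` of subsets of `X` has uniform asymptotic property C if for
every positive sequence `S` there are `k` and a uniform bound `D` such that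
every `Y ∈ 𝒴` is covered by `k` families of `Sⱼ`-disjoint subsets of `Y` of
diameter at most `D`. -/
def UniformAPC {X : Type*} [MetricSpace X] (𝒴 : Set (Set X)) : Prop :=
  ∀ S : ℕ → ℝ, (∀ i, 0 < S i) →
    ∃ (k : ℕ) (D : ℝ), ∀ Y ∈ 𝒴, ∃ 𝒰 : Fin k → Set (Set X),
      (∀ j : Fin k, RDisjoint (S j.val) (𝒰 j)) ∧
      (∀ j, ∀ U ∈ 𝒰 j, U ⊆ Y ∧ ∀ x ∈ U, ∀ y ∈ U, dist x y ≤ D) ∧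
      (∀ x ∈ Y, ∃ j, ∃ U ∈ 𝒰 j, x ∈ U)

/-!
Replace `R` by its running maximum, so that a family disjoint at a larger scale may serve at a
smaller one. For each block `i`, uniform asymptotic property C of `𝒴` at the scales
`R (pair i j)` gives `k i` families of uniformly bounded sets. Decomposing `X` over `𝒴` with the
scale of block `i` at least `R (pair i (k i))`, the `j`-th families of the members of an
`R`-disjoint subfamily of `𝒴` merge into one `R (pair i j)`-disjoint family. Cantor pairing makes
the levels `pair i j` of these finitely many families pairwise distinct, so unused levels can be
filled with empty families.
-/

open Function

section

variable {X : Type*} [MetricSpace X]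

theorem RDisjoint.mono {r s : ℝ} {𝒰 : Set (Set X)} (h : RDisjoint r 𝒰) (hsr : s ≤ r) :
    RDisjoint s 𝒰 :=
  fun U hU V hV hUV x hx y hy => hsr.trans_lt (h U hU V hV hUV x hx y hy)

theorem RDisjoint.biUnion {r : ℝ} {𝒱 : Set (Set X)} {𝒞 : Set X → Set (Set X)}
    (h𝒱 : RDisjoint r 𝒱) (h𝒞 : ∀ Y ∈ 𝒱, RDisjoint r (𝒞 Y))
    (hsub : ∀ Y ∈ 𝒱, ∀ U ∈ 𝒞 Y, U ⊆ Y) : RDisjoint r (⋃ Y ∈ 𝒱, 𝒞 Y) := by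
  intro U hU V hV hUV x hx y hy
  obtain ⟨Y, hY, hUY⟩ := Set.mem_iUnion₂.mp hU
  obtain ⟨Y', hY', hVY'⟩ := Set.mem_iUnion₂.mp hV
  by_cases hYY' : Y = Y'
  · subst hYY'
    exact h𝒞 Y hY U hUY V hVY' hUV x hx y hy
  · exact h𝒱 Y hY Y' hY' hYY' x (hsub Y hY U hUY hx) y (hsub Y' hY' V hVY' hy)

theorem exists_apc_cover_of_injective {ι : Type*} [Finite ι] {R : ℕ → ℝ} (ℓ : ι → ℕ)
    (hℓ : Injective ℓ) (𝒰 : ι → Set (Set X)) (D : ℝ)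
    (hdisj : ∀ p, RDisjoint (R (ℓ p)) (𝒰 p)) (hcov : ∀ x, ∃ p, ∃ U ∈ 𝒰 p, x ∈ U)
    (hbdd : ∀ p, ∀ U ∈ 𝒰 p, ∀ x ∈ U, ∀ y ∈ U, dist x y ≤ D) :
    ∃ (n : ℕ) (𝒰' : Fin n → Set (Set X)) (D' : ℝ),
      (∀ t : Fin n, RDisjoint (R t.val) (𝒰' t)) ∧
      (∀ x : X, ∃ t, ∃ U ∈ 𝒰' t, x ∈ U) ∧
      (∀ t, ∀ U ∈ 𝒰' t, ∀ x ∈ U, ∀ y ∈ U, dist x y ≤ D') := by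
  obtain ⟨N, hN⟩ := (Set.finite_range ℓ).bddAbove
  refine ⟨N + 1, fun t => {U | ∃ p, ℓ p = t ∧ U ∈ 𝒰 p}, D, ?_, ?_, ?_⟩
  · rintro t U ⟨p, hp, hU⟩ V ⟨q, hq, hV⟩
    obtain rfl : p = q := hℓ (hp.trans hq.symm)
    exact hp ▸ hdisj p U hU V hV
  · intro x
    obtain ⟨p, U, hU, hx⟩ := hcov x
    exact ⟨⟨ℓ p, Nat.lt_succ_of_le (hN ⟨p, rfl⟩)⟩, U, ⟨p, rfl, hU⟩, hx⟩
  · rintro t U ⟨p, -, hU⟩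
    exact hbdd p U hU

end

/-- Decomposition theorem for asymptotic property C: if `X` admits, for every
positive sequence `R`, a uniform `R`-decomposition over a fixed family `𝒴`
with uniform asymptotic property C, then `X` has asymptotic property C. -/
theorem apc_decomposition {X : Type*} [MetricSpace X]
    (𝒴 : Set (Set X)) (h𝒴 : UniformAPC 𝒴)
    (hdec : ∀ R : ℕ → ℝ, (∀ i, 0 < R i) →
      ∃ (k : ℕ) (𝒰 : Fin k → Set (Set X)),
        (∀ i, 𝒰 i ⊆ 𝒴) ∧
        (∀ i : Fin k, RDisjoint (R i.val) (𝒰 i)) ∧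
        (∀ x : X, ∃ i, ∃ U ∈ 𝒰 i, x ∈ U)) :
    APC X := by
  intro R hR
  set R' := partialSups R
  have hR' : ∀ l, 0 < R' l := fun l => (hR l).trans_le (le_partialSups R l)
  choose k D h𝒞 using fun i : ℕ => h𝒴 (fun j => R' (Nat.pair i j)) fun j => hR' _
  choose! 𝒞 h𝒞disj h𝒞sub h𝒞cov using h𝒞
  obtain ⟨m, 𝒱, h𝒱𝒴, h𝒱disj, h𝒱cov⟩ := hdec (fun i => R' (Nat.pair i (k i))) fun i => hR' _
  obtain ⟨D₀, hD₀⟩ := (Set.finite_range fun i : Fin m => D i).bddAbove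
  refine exists_apc_cover_of_injective (ι := Σ i : Fin m, Fin (k i))
    (fun p => Nat.pair p.1 p.2) ?_ (fun p => ⋃ Y ∈ 𝒱 p.1, 𝒞 p.1 Y p.2) D₀ ?_ ?_ ?_
  · rintro ⟨i, j⟩ ⟨i', j'⟩ h
    obtain ⟨hi, hj⟩ := Nat.pair_eq_pair.mp h
    obtain rfl := Fin.ext hi
    obtain rfl := Fin.ext hj
    rfl
  · rintro ⟨i, j⟩
    have hRR' : R (Nat.pair i j) ≤ R' (Nat.pair i j) := le_partialSups R _
    refine RDisjoint.biUnion ((h𝒱disj i).mono (hRR'.trans (R'.monotone ?_)))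
      (fun Y hY => (h𝒞disj i Y (h𝒱𝒴 i hY) j).mono hRR') fun Y hY => ?_
    · exact (Nat.pair_lt_pair_right _ j.isLt).le
    · exact fun U hU => (h𝒞sub i Y (h𝒱𝒴 i hY) j U hU).1
  · intro x
    obtain ⟨i, Y, hY, hxY⟩ := h𝒱cov x
    obtain ⟨j, U, hU, hxU⟩ := h𝒞cov i Y (h𝒱𝒴 i hY) x hxY
    exact ⟨⟨i, j⟩, U, Set.mem_iUnion₂.mpr ⟨Y, hY, hU⟩, hxU⟩
  · rintro ⟨i, j⟩ U hU x hx y hy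
    obtain ⟨Y, hY, hUY⟩ := Set.mem_iUnion₂.mp hU
    exact ((h𝒞sub i Y (h𝒱𝒴 i hY) j U hUY).2 x hx y hy).trans (hD₀ ⟨i, rfl⟩)
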